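/- arXiv:2103.02681 — 2 statements merged into one kernel-verified Lean document; each statement's English description precedes it below -/
import Mathlib

section
/- Let ε > 0 and λ > 0 with √λ ≤ ε. Then for every z ∈ ℝ: prox_{λg}(z) = {0} if |z| ≤ λ/ε, and prox_{λg}(z) = {sgn(z)·r₂(|z|)} if |z| > λ/ε, where r₂(w) = (w − ε)/2 + √((w + ε)²/4 − λ). -/
open Real Filter

/-- The scalar log-sum penalty `g(w) = log(1 + |w|/ε)`. -/
noncomputable def logpen (ε : ℝ) (w : ℝ) : ℝ := Real.log (1 + |w| / ε)

/-- The objective `q_{λ,z}(x) = (1/(2λ))(x − z)² + g(x)`. -/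
noncomputable def qfun (lam ε z x : ℝ) : ℝ :=
  1 / (2 * lam) * (x - z) ^ 2 + logpen ε x

/-- The proximity operator of `λ g` at `z`: the set of global minimizers of `q_{λ,z}`. -/
def prox (lam ε z : ℝ) : Set ℝ := {x | ∀ y : ℝ, qfun lam ε z x ≤ qfun lam ε z y}

/-- `r₁(z) = (z − ε)/2 − √((z + ε)²/4 − λ)`. -/
noncomputable def r1 (lam ε z : ℝ) : ℝ :=
  (z - ε) / 2 - Real.sqrt ((z + ε) ^ 2 / 4 - lam)

/-- `r₂(z) = (z − ε)/2 + √((z + ε)²/4 − λ)`. -/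
noncomputable def r2 (lam ε z : ℝ) : ℝ :=
  (z - ε) / 2 + Real.sqrt ((z + ε) ^ 2 / 4 - lam)

/-- `r(z) = q_{λ,z}(r₂(z)) − q_{λ,z}(0)`. -/
noncomputable def rfun (lam ε z : ℝ) : ℝ :=
  qfun lam ε z (r2 lam ε z) - qfun lam ε z 0

/-- The iteratively reweighted ℓ₁ iteration for `prox_{λ g}(z)`. -/
def IterRW (lam ε z : ℝ) (x : ℕ → ℝ) : Prop :=
  ∀ k : ℕ, x (k + 1) =
    if |z| ≤ lam / (ε + |x k|) then 0
    else Real.sign z * (|z| - lam / (ε + |x k|))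

/-! On `x > 0` the derivative of `qfun lam ε z` has the sign of the quadratic
`(x - z) * (x + ε) + λ`. If `z ≤ λ/ε` and `z ≤ ε` (the latter because `√λ ≤ ε`), this quadratic
is positive for `x > 0`, so `qfun` is strictly increasing on `[0, ∞)`. If `z > λ/ε`, its roots
are `r₂(z) > 0` and `z - ε - r₂(z) < 0`, so `qfun` strictly decreases on `[0, r₂(z)]` and strictly
increases afterwards. For `z ≥ 0` replacing `x` by `|x|` does not increase `qfun`, and the case
`z < 0` follows from the symmetry `prox (-z) = -prox z`. -/

open scoped Pointwise

lemma qfun_neg (lam ε z x : ℝ) : qfun lam ε (-z) x = qfun lam ε z (-x) := by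
  simp only [qfun, logpen, abs_neg]
  ring

lemma prox_neg (lam ε z : ℝ) : prox lam ε (-z) = -prox lam ε z := by
  ext x
  simp only [prox, Set.mem_neg, Set.mem_ofPred_eq, qfun_neg]
  exact ⟨fun hx y => by simpa only [neg_neg] using hx (-y), fun hx y => hx (-y)⟩

section

variable {lam ε z : ℝ}

lemma prox_eq_singleton_of_forall_lt {m : ℝ}
    (h : ∀ y, y ≠ m → qfun lam ε z m < qfun lam ε z y) : prox lam ε z = {m} := by
  ext x
  refine ⟨fun hx => ?_, fun hx y => ?_⟩
  · by_contra hxm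
    exact (h x hxm).not_ge (hx m)
  · rw [Set.mem_singleton_iff.mp hx]
    rcases eq_or_ne y m with rfl | hym
    · exact le_rfl
    · exact (h y hym).le

lemma qfun_abs_le (hlam : 0 ≤ lam) (hz : 0 ≤ z) (x : ℝ) :
    qfun lam ε z |x| ≤ qfun lam ε z x := by
  have : (|x| - z) ^ 2 ≤ (x - z) ^ 2 := by
    nlinarith [le_abs_self x, sq_abs x]
  simp only [qfun, logpen, abs_abs]
  gcongr

lemma qfun_abs_lt (hlam : 0 < lam) (hz : 0 < z) {x : ℝ} (hx : x < 0) :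
    qfun lam ε z |x| < qfun lam ε z x := by
  have : (|x| - z) ^ 2 < (x - z) ^ 2 := by
    rw [abs_of_neg hx]
    nlinarith
  simp only [qfun, logpen, abs_abs]
  gcongr

lemma continuous_qfun (hε : 0 < ε) : Continuous (qfun lam ε z) := by
  unfold qfun logpen
  refine (by fun_prop : Continuous fun x => 1 / (2 * lam) * (x - z) ^ 2).add
    ((by fun_prop : Continuous fun x => 1 + |x| / ε).log fun x => ?_)
  positivity

lemma hasDerivAt_qfun (hε : 0 < ε) (hlam : lam ≠ 0) {x : ℝ} (hx : 0 < x) :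
    HasDerivAt (qfun lam ε z) (((x - z) * (x + ε) + lam) / (lam * (x + ε))) x := by
  have hsq := (((hasDerivAt_id x).sub_const z).pow 2).const_mul (1 / (2 * lam))
  have hlog := (((hasDerivAt_abs_pos hx).div_const ε).const_add 1).log (by positivity)
  refine (hsq.add hlog).congr_deriv ?_
  rw [abs_of_pos hx, id]
  field_simp
  ring

lemma lt_of_strictAntiOn_Icc_of_strictMonoOn_Ici {f : ℝ → ℝ} {a m y : ℝ} (ham : a ≤ m)
    (hanti : StrictAntiOn f (Set.Icc a m)) (hmono : StrictMonoOn f (Set.Ici m))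
    (hy : a ≤ y) (hym : y ≠ m) : f m < f y := by
  rcases hym.lt_or_gt with hlt | hgt
  · exact hanti ⟨hy, hlt.le⟩ ⟨ham, le_rfl⟩ hlt
  · exact hmono Set.self_mem_Ici hgt.le hgt

lemma qfun_lt_qfun_of_nonneg (hε : 0 < ε) (hlam : 0 < lam) {m : ℝ} (hm : 0 ≤ m)
    (hlt : ∀ x ∈ Set.Ioo 0 m, (x - z) * (x + ε) + lam < 0)
    (hgt : ∀ x, m < x → 0 < (x - z) * (x + ε) + lam)
    {y : ℝ} (hy : 0 ≤ y) (hym : y ≠ m) : qfun lam ε z m < qfun lam ε z y := by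
  refine lt_of_strictAntiOn_Icc_of_strictMonoOn_Ici hm ?_ ?_ hy hym
  · refine strictAntiOn_of_deriv_neg (convex_Icc 0 m) (continuous_qfun hε).continuousOn
      fun x hx => ?_
    rw [interior_Icc] at hx
    rw [(hasDerivAt_qfun hε hlam.ne' hx.1).deriv]
    exact div_neg_of_neg_of_pos (hlt x hx) (by nlinarith [hx.1])
  · refine strictMonoOn_of_deriv_pos (convex_Ici m) (continuous_qfun hε).continuousOn
      fun x hx => ?_
    rw [interior_Ici] at hx
    have hx0 : 0 < x := hm.trans_lt hx
    rw [(hasDerivAt_qfun hε hlam.ne' hx0).deriv]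
    exact div_pos (hgt x hx) (by positivity)

lemma prox_eq_singleton_zero (hε : 0 < ε) (hlam : 0 < lam) (hz0 : 0 ≤ z) (hzε : z ≤ ε)
    (hz : z ≤ lam / ε) : prox lam ε z = {0} := by
  rw [le_div_iff₀ hε] at hz
  refine prox_eq_singleton_of_forall_lt fun y hy => ?_
  have hpos : ∀ x, 0 < x → 0 < (x - z) * (x + ε) + lam := fun x hx => by
    nlinarith [mul_nonneg hx.le (sub_nonneg.2 hzε)]
  calc qfun lam ε z 0
      < qfun lam ε z |y| := qfun_lt_qfun_of_nonneg hε hlam le_rfl (by simp) hpos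
        (abs_nonneg y) (abs_ne_zero.2 hy)
    _ ≤ qfun lam ε z y := qfun_abs_le hlam.le hz0 y

lemma abs_sub_lt_two_mul_sqrt (hz : lam < z * ε) :
    |z - ε| < 2 * √((z + ε) ^ 2 / 4 - lam) := by
  have : |z - ε| / 2 < √((z + ε) ^ 2 / 4 - lam) := by
    rw [Real.lt_sqrt (by positivity), div_pow, sq_abs]
    nlinarith
  linarith

lemma r2_sub_mul_r2_add_eq_neg (hz : lam ≤ (z + ε) ^ 2 / 4) :
    (r2 lam ε z - z) * (r2 lam ε z + ε) = -lam := by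
  have hs := Real.sq_sqrt (sub_nonneg.2 hz)
  unfold r2
  linear_combination hs

lemma prox_eq_singleton_r2 (hε : 0 < ε) (hlam : 0 < lam) (hz : lam / ε < z) :
    prox lam ε z = {r2 lam ε z} := by
  rw [div_lt_iff₀ hε] at hz
  have hz0 : 0 < z := by nlinarith
  have habs := abs_lt.1 (abs_sub_lt_two_mul_sqrt hz)
  have hroot : (r2 lam ε z - z) * (r2 lam ε z + ε) = -lam :=
    r2_sub_mul_r2_add_eq_neg (by nlinarith [sq_nonneg (z - ε)])
  set m := r2 lam ε z
  have hm : m = (z - ε) / 2 + √((z + ε) ^ 2 / 4 - lam) := rfl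
  have hm0 : 0 < m := by linarith
  have hfactor : ∀ x, (x - z) * (x + ε) + lam = (x - m) * (x + m + ε - z) := fun x => by
    linear_combination hroot
  have hlt : ∀ x ∈ Set.Ioo 0 m, (x - z) * (x + ε) + lam < 0 := fun x hx => by
    rw [hfactor]
    exact mul_neg_of_neg_of_pos (by linarith [hx.2]) (by linarith [hx.1])
  have hgt : ∀ x, m < x → 0 < (x - z) * (x + ε) + lam := fun x hx => by
    rw [hfactor]
    exact mul_pos (by linarith) (by linarith)
  refine prox_eq_singleton_of_forall_lt fun y hy => ?_
  rcases le_or_gt 0 y with hy0 | hy0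
  · exact qfun_lt_qfun_of_nonneg hε hlam hm0.le hlt hgt hy0 hy
  · calc qfun lam ε z m
        ≤ qfun lam ε z |y| := by
          rcases eq_or_ne |y| m with h | h
          · rw [h]
          · exact (qfun_lt_qfun_of_nonneg hε hlam hm0.le hlt hgt (abs_nonneg y) h).le
      _ < qfun lam ε z y := qfun_abs_lt hlam hz0 hy0

end

/-- explicit form of `prox_{λg}` when `√λ ≤ ε`. -/
theorem prox_formula_sqrt_le (ε lam : ℝ) (hε : 0 < ε) (hlam : 0 < lam)
    (h : Real.sqrt lam ≤ ε) (z : ℝ) :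
    (|z| ≤ lam / ε → prox lam ε z = {0}) ∧
    (lam / ε < |z| → prox lam ε z = {Real.sign z * r2 lam ε |z|}) := by
  wlog hz : 0 ≤ z generalizing z
  · obtain ⟨h0, hr2⟩ := this (-z) (by linarith)
    rw [abs_neg, prox_neg, neg_eq_iff_eq_neg] at h0 hr2
    rw [Real.sign_neg] at hr2
    refine ⟨fun hz' => ?_, fun hz' => ?_⟩
    · rw [h0 hz', Set.neg_singleton, neg_zero]
    · rw [hr2 hz', Set.neg_singleton, neg_mul, neg_neg]
  have hdiv_le : lam / ε ≤ ε := by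
    rw [div_le_iff₀ hε, ← sq]
    exact (Real.sqrt_le_left hε.le).1 h
  rw [abs_of_nonneg hz]
  refine ⟨fun hz' => prox_eq_singleton_zero hε hlam hz (hz'.trans hdiv_le) hz', fun hz' => ?_⟩
  rw [Real.sign_of_pos ((div_pos hlam hε).trans hz'), one_mul]
  exact prox_eq_singleton_r2 hε hlam hz'
end

section
/- Let ε > 0 and λ > 0 with √λ > ε. Let z ∈ [2√λ − ε, λ/ε), and let the sequence (x^{(k)})_{k≥0} be generated by the reweighted ℓ₁ iteration from an initial guess x^{(0)} ∈ (r₁(z), ∞), where r₁(z) = (z − ε)/2 − √((z + ε)²/4 − λ). Then the sequence (x^{(k)}) converges to r₂(z) = (z − ε)/2 + √((z + ε)²/4 − λ). -/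
open Real Filter

/-!
For `z > 0` and iterates `x > r₁ ≥ 0` the threshold is never active, and the iteration is
`x ↦ T x = z − λ/(ε + x)` (`rwStep` below). This map is increasing on `(−ε, ∞)`, and
`T x − x = (x − r₁)(r₂ − x)/(ε + x)`, so `r₁ ≤ r₂` are its fixed points there. An orbit started
in `(r₁, r₂]` therefore increases and stays below `r₂`, one started in `[r₂, ∞)` decreases and
stays above `r₂`; in both cases it converges to a fixed point that exceeds `r₁`, namely `r₂`.
-/

open Set Function

theorem eq_iterate_of_mapsTo {α : Type*} {f : α → α} {s : Set α} {x : ℕ → α}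
    (hf : MapsTo f s s) (h0 : x 0 ∈ s) (hx : ∀ k, x k ∈ s → x (k + 1) = f (x k)) :
    ∀ k, x k = f^[k] (x 0)
  | 0 => rfl
  | k + 1 => by
    have ih := eq_iterate_of_mapsTo hf h0 hx k
    rw [hx k (ih ▸ hf.iterate k h0), ih, iterate_succ_apply']

theorem r1_add_r2 (lam ε z : ℝ) : r1 lam ε z + r2 lam ε z = z - ε := by
  unfold r1 r2; ring

theorem r1_le_r2 (lam ε z : ℝ) : r1 lam ε z ≤ r2 lam ε z := by
  unfold r1 r2; linarith [Real.sqrt_nonneg ((z + ε) ^ 2 / 4 - lam)]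

section

variable {lam ε z t L : ℝ}

theorem r1_mul_r2 (hd : lam ≤ (z + ε) ^ 2 / 4) : r1 lam ε z * r2 lam ε z = lam - ε * z := by
  unfold r1 r2
  linear_combination (-1) * Real.sq_sqrt (sub_nonneg.mpr hd)

theorem r1_pos (hzε : ε < z) (hεz : ε * z < lam) : 0 < r1 lam ε z := by
  rw [r1, sub_pos, Real.sqrt_lt' (by linarith)]
  nlinarith

noncomputable def rwStep (lam ε z t : ℝ) : ℝ := z - lam / (ε + t)

theorem IterRW.succ_eq_rwStep {x : ℕ → ℝ} {k : ℕ} (hiter : IterRW lam ε z x) (hz : 0 < z)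
    (hx : 0 ≤ x k) (hstep : 0 < rwStep lam ε z (x k)) : x (k + 1) = rwStep lam ε z (x k) := by
  rw [rwStep, sub_pos] at hstep
  rw [hiter k, abs_of_pos hz, abs_of_nonneg hx, if_neg hstep.not_ge, Real.sign_of_pos hz,
    one_mul, rwStep]

theorem rwStep_sub_self (hd : lam ≤ (z + ε) ^ 2 / 4) (ht : ε + t ≠ 0) :
    rwStep lam ε z t - t = (t - r1 lam ε z) * (r2 lam ε z - t) / (ε + t) := by
  rw [eq_div_iff ht, rwStep]
  linear_combination (-1) * div_mul_cancel₀ lam ht - t * r1_add_r2 lam ε z + r1_mul_r2 hd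

theorem isFixedPt_rwStep_iff (hd : lam ≤ (z + ε) ^ 2 / 4) (ht : ε + t ≠ 0) :
    IsFixedPt (rwStep lam ε z) t ↔ t = r1 lam ε z ∨ t = r2 lam ε z := by
  rw [IsFixedPt, ← sub_eq_zero, rwStep_sub_self hd ht, div_eq_zero_iff, or_iff_left ht,
    mul_eq_zero, sub_eq_zero, sub_eq_zero, eq_comm (a := r2 lam ε z)]

theorem rwStep_strictMonoOn (hlam : 0 < lam) : StrictMonoOn (rwStep lam ε z) (Ioi (-ε)) := by
  intro s hs t ht hst
  rw [mem_Ioi] at hs ht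
  exact sub_lt_sub_left (div_lt_div_of_pos_left hlam (by linarith) (by linarith)) z

theorem continuousAt_rwStep (ht : ε + t ≠ 0) : ContinuousAt (rwStep lam ε z) t := by
  unfold rwStep; fun_prop (disch := exact ht)


theorem rwStep_r1 (hd : lam ≤ (z + ε) ^ 2 / 4) (hr1 : -ε < r1 lam ε z) :
    rwStep lam ε z (r1 lam ε z) = r1 lam ε z :=
  (isFixedPt_rwStep_iff hd (by linarith)).mpr (Or.inl rfl)

theorem rwStep_r2 (hd : lam ≤ (z + ε) ^ 2 / 4) (hr1 : -ε < r1 lam ε z) :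
    rwStep lam ε z (r2 lam ε z) = r2 lam ε z :=
  (isFixedPt_rwStep_iff hd (by linarith [r1_le_r2 lam ε z])).mpr (Or.inr rfl)

theorem mapsTo_rwStep_Ioi_r1 (hlam : 0 < lam) (hd : lam ≤ (z + ε) ^ 2 / 4)
    (hr1 : -ε < r1 lam ε z) : MapsTo (rwStep lam ε z) (Ioi (r1 lam ε z)) (Ioi (r1 lam ε z)) :=
  fun _ ht => rwStep_r1 hd hr1 ▸ rwStep_strictMonoOn hlam hr1 (hr1.trans (mem_Ioi.mp ht)) ht

theorem eq_r1_or_eq_r2_of_tendsto_iterate (hd : lam ≤ (z + ε) ^ 2 / 4) (hL : ε + L ≠ 0)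
    (h : Tendsto (fun k => (rwStep lam ε z)^[k] t) atTop (nhds L)) :
    L = r1 lam ε z ∨ L = r2 lam ε z :=
  (isFixedPt_rwStep_iff hd hL).mp (isFixedPt_of_tendsto_iterate h (continuousAt_rwStep hL))

theorem tendsto_iterate_rwStep_of_le_r2 (hlam : 0 < lam) (hd : lam ≤ (z + ε) ^ 2 / 4)
    (hr1 : -ε < r1 lam ε z) (ht₁ : r1 lam ε z < t) (ht₂ : t ≤ r2 lam ε z) :
    Tendsto (fun k => (rwStep lam ε z)^[k] t) atTop (nhds (r2 lam ε z)) := by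
  set T := rwStep lam ε z
  have hmaps : MapsTo T (Ioc (r1 lam ε z) (r2 lam ε z)) (Ioc (r1 lam ε z) (r2 lam ε z)) :=
    fun s hs => ⟨mapsTo_rwStep_Ioi_r1 hlam hd hr1 hs.1, rwStep_r2 hd hr1 ▸
      (rwStep_strictMonoOn hlam).monotoneOn (mem_Ioi.mpr (hr1.trans hs.1))
        (mem_Ioi.mpr (hr1.trans (hs.1.trans_le hs.2))) hs.2⟩
  have hle : ∀ s ∈ Ioc (r1 lam ε z) (r2 lam ε z), s ≤ T s := fun s ⟨hs₁, hs₂⟩ => by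
    rw [← sub_nonneg, rwStep_sub_self hd (by linarith)]
    exact div_nonneg (mul_nonneg (by linarith) (by linarith)) (by linarith)
  have horbit (k : ℕ) : T^[k] t ∈ Ioc (r1 lam ε z) (r2 lam ε z) := hmaps.iterate k ⟨ht₁, ht₂⟩
  have hbdd : BddAbove (range fun k => T^[k] t) := ⟨r2 lam ε z, by
    rintro _ ⟨k, rfl⟩; exact (horbit k).2⟩
  have hlim := tendsto_atTop_ciSup (monotone_nat_of_le_succ fun k => by
    rw [iterate_succ_apply']; exact hle _ (horbit k)) hbdd
  have hsup : t ≤ ⨆ k, T^[k] t := le_ciSup hbdd 0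
  rcases eq_r1_or_eq_r2_of_tendsto_iterate hd (by linarith) hlim with h | h
  · linarith
  · rwa [h] at hlim

theorem tendsto_iterate_rwStep_of_r2_le (hlam : 0 < lam) (hd : lam ≤ (z + ε) ^ 2 / 4)
    (hr1 : -ε < r1 lam ε z) (ht : r2 lam ε z ≤ t) :
    Tendsto (fun k => (rwStep lam ε z)^[k] t) atTop (nhds (r2 lam ε z)) := by
  set T := rwStep lam ε z
  have hr12 := r1_le_r2 lam ε z
  have hmaps : MapsTo T (Ici (r2 lam ε z)) (Ici (r2 lam ε z)) := fun s hs => rwStep_r2 hd hr1 ▸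
    (rwStep_strictMonoOn hlam).monotoneOn (mem_Ioi.mpr (by linarith))
      (mem_Ioi.mpr (by linarith [mem_Ici.mp hs])) hs
  have hle : ∀ s ∈ Ici (r2 lam ε z), T s ≤ s := fun s hs => by
    rw [mem_Ici] at hs
    rw [← sub_nonpos, rwStep_sub_self hd (by linarith)]
    exact div_nonpos_of_nonpos_of_nonneg (mul_nonpos_of_nonneg_of_nonpos (by linarith)
      (by linarith)) (by linarith)
  have horbit (k : ℕ) : T^[k] t ∈ Ici (r2 lam ε z) := hmaps.iterate k ht
  have hbdd : BddBelow (range fun k => T^[k] t) := ⟨r2 lam ε z, by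
    rintro _ ⟨k, rfl⟩; exact horbit k⟩
  have hlim := tendsto_atTop_ciInf (antitone_nat_of_succ_le fun k => by
    rw [iterate_succ_apply']; exact hle _ (horbit k)) hbdd
  have hinf : r2 lam ε z ≤ ⨅ k, T^[k] t := le_ciInf horbit
  rcases eq_r1_or_eq_r2_of_tendsto_iterate hd (by linarith) hlim with h | h
  · rwa [show ⨅ k, T^[k] t = r2 lam ε z by linarith] at hlim
  · rwa [h] at hlim

theorem tendsto_iterate_rwStep (hlam : 0 < lam) (hd : lam ≤ (z + ε) ^ 2 / 4)
    (hr1 : -ε < r1 lam ε z) (ht : r1 lam ε z < t) :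
    Tendsto (fun k => (rwStep lam ε z)^[k] t) atTop (nhds (r2 lam ε z)) :=
  (le_total t (r2 lam ε z)).elim (tendsto_iterate_rwStep_of_le_r2 hlam hd hr1 ht)
    (tendsto_iterate_rwStep_of_r2_le hlam hd hr1)

end

/-- for `√λ > ε`, `z ∈ [2√λ − ε, λ/ε)`, and `x⁽⁰⁾ > r₁(z)`,
the reweighted ℓ₁ sequence converges to `r₂(z)`. -/
theorem iterRW_conv_mid_z_above_r1 (ε lam z : ℝ) (hε : 0 < ε) (hlam : 0 < lam)
    (h : ε < Real.sqrt lam)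
    (hz : z ∈ Set.Ico (2 * Real.sqrt lam - ε) (lam / ε))
    (x : ℕ → ℝ) (hx0 : r1 lam ε z < x 0) (hiter : IterRW lam ε z x) :
    Filter.Tendsto x Filter.atTop (nhds (r2 lam ε z)) := by
  obtain ⟨hz₁, hz₂⟩ := hz
  have hεz : ε * z < lam := by rwa [lt_div_iff₀ hε, mul_comm] at hz₂
  have hd : lam ≤ (z + ε) ^ 2 / 4 := by
    nlinarith [Real.sq_sqrt hlam.le, Real.sqrt_nonneg lam]
  have hr1 : 0 < r1 lam ε z := r1_pos (by linarith) hεz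
  have hmaps := mapsTo_rwStep_Ioi_r1 hlam hd (by linarith)
  have horbit := eq_iterate_of_mapsTo hmaps hx0 fun k hk =>
    hiter.succ_eq_rwStep (by linarith) (hr1.trans hk).le (hr1.trans (hmaps hk))
  rw [funext horbit]
  exact tendsto_iterate_rwStep hlam hd (by linarith) hx0
end
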